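/- Let 𝒢 be a graph with m connected components, each a cycle of odd length k = 2γ+1. The regularity index of I(X*_𝒢) equals m(k+γ)(q−1)/2 − km; that is, the least integer p ≥ 0 such that the affine Hilbert function satisfies H_{X*_𝒢}(d) = |X*_𝒢| for all d ≥ p is p = m(k+γ)(q−1)/2 − km. -/

import Mathlib

open MvPolynomial

/-- The affine algebraic toric set parameterized by the disjoint union of `m` cycles of
length `k`. -/
def cyclesToricSet (K : Type) [Field K] (k m : ℕ) : Set (Fin m × Fin k → K) :=
  {y | ∃ x : Fin m × Fin k → K, (∀ p, x p ≠ 0) ∧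
    ∀ p : Fin m × Fin k, y p = x p * x (p.1, finRotate k p.2)}

/-- The affine Hilbert function of a set `X ⊆ K^σ`:
`H_X(d) = dim_K S_{≤d} / I(X)_{≤d}`, where `S_{≤d}` is the space of polynomials of total
degree at most `d` and `I(X)_{≤d} = I(X) ∩ S_{≤d}`. -/
noncomputable def affineHilbertFunction (K : Type) [Field K] {σ : Type} (X : Set (σ → K))
    (d : ℕ) : ℕ :=
  Module.finrank K
    (↥(MvPolynomial.restrictTotalDegree σ K d) ⧸
      Submodule.comap (MvPolynomial.restrictTotalDegree σ K d).subtype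
        (Submodule.restrictScalars K (MvPolynomial.vanishingIdeal K X)))

/-!
Over a finite field every function on `X` is a polynomial function, so `H_X(d) = |X|` exactly
when every monomial function on `X` agrees with one of degree at most `d`. The set `X` is a
monoid, the image of `(K^*)^{km}` under `x ↦ (x_i x_{i+1})`, and monomials restrict to
characters of it.

Write `q - 1 = 2h`. On `X` every coordinate satisfies `y^{2h} = 1` and the product over each
cycle is a square, so the exponents along a cycle may be reduced mod `2h` and then shifted
together by `h`; as the cycle is odd, one of the two choices has degree at most
`(2γ+1)(h-1) + γh`. Conversely, evaluating at the points with value `c` on two adjacent edges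
shows that two exponent vectors give the same character only if, on each cycle, they agree
mod `2h` up to a common shift by `h`. Hence every representative of the character with
exponent `2h-1` on `γ` edges of each cycle and `h-1` on the others has degree at least
`m((2γ+1)(h-1) + γh)`, and by Dedekind's independence of characters that character is not a
combination of monomials of smaller degree.
-/

section MonomialFunctions

variable {K σ : Type} [Field K]

noncomputable def evalOn (X : Set (σ → K)) : MvPolynomial σ K →ₗ[K] X → K :=
  LinearMap.funLeft K K Subtype.val ∘ₗ evalₗ K σ

lemma ker_evalOn (X : Set (σ → K)) :
    LinearMap.ker (evalOn X) = (vanishingIdeal K X).restrictScalars K := by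
  ext p
  simp [evalOn, mem_vanishingIdeal_iff, funext_iff, LinearMap.funLeft]

variable [Fintype σ]

def monomialFun (X : Set (σ → K)) (a : σ → ℕ) : X → K :=
  fun y => ∏ p, (y : σ → K) p ^ a p

lemma evalOn_monomial (X : Set (σ → K)) (u : σ →₀ ℕ) :
    evalOn X (monomial u 1) = monomialFun X u := by
  ext y
  simp [evalOn, LinearMap.funLeft, monomialFun, eval_monomial, Finsupp.prod_fintype]

lemma map_evalOn_restrictTotalDegree (X : Set (σ → K)) (d : ℕ) :
    (restrictTotalDegree σ K d).map (evalOn X) =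
      Submodule.span K (monomialFun X '' {a | ∑ p, a p ≤ d}) := by
  rw [restrictTotalDegree, restrictSupport_eq_span, Submodule.map_span, Set.image_image]
  simp_rw [evalOn_monomial]
  congr 1
  ext f
  simp only [Set.mem_image, Set.mem_ofPred_eq]
  constructor
  · rintro ⟨u, hu, rfl⟩
    exact ⟨u, by simpa [Finsupp.sum_fintype] using hu, rfl⟩
  · rintro ⟨a, ha, rfl⟩
    exact ⟨Finsupp.equivFunOnFinite.symm a, by simpa [Finsupp.sum_fintype] using ha, rfl⟩

lemma affineHilbertFunction_eq_finrank_span (X : Set (σ → K)) (d : ℕ) :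
    affineHilbertFunction K X d =
      Module.finrank K (Submodule.span K (monomialFun X '' {a | ∑ p, a p ≤ d})) := by
  rw [affineHilbertFunction, ← ker_evalOn, ← LinearMap.ker_comp,
    (LinearMap.quotKerEquivRange _).finrank_eq, LinearMap.range_comp, Submodule.range_subtype,
    map_evalOn_restrictTotalDegree]

variable [Fintype K]

lemma evalOn_surjective (X : Set (σ → K)) : Function.Surjective (evalOn X) := by
  have hev : Function.Surjective (evalₗ K σ) := by
    rw [← LinearMap.range_eq_top, ← top_le_iff, ← map_restrict_dom_evalₗ]
    exact LinearMap.map_le_range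
  exact (LinearMap.funLeft_surjective_of_injective K K _ Subtype.val_injective).comp hev

lemma span_range_monomialFun (X : Set (σ → K)) :
    Submodule.span K (Set.range (monomialFun X)) = ⊤ := by
  rw [eq_top_iff, ← LinearMap.range_eq_top.2 (evalOn_surjective X), LinearMap.range_eq_map,
    ← (basisMonomials σ K).span_eq, Submodule.map_span, Submodule.span_le]
  rintro _ ⟨_, ⟨u, rfl⟩, rfl⟩
  exact Submodule.subset_span ⟨u, by simp [evalOn_monomial]⟩

lemma affineHilbertFunction_eq_ncard_iff (X : Set (σ → K)) (d : ℕ) :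
    affineHilbertFunction K X d = X.ncard ↔
      Set.range (monomialFun X) ⊆ Submodule.span K (monomialFun X '' {a | ∑ p, a p ≤ d}) := by
  have : Fintype X := Fintype.ofFinite X
  rw [affineHilbertFunction_eq_finrank_span, ← Submodule.span_le, span_range_monomialFun,
    top_le_iff, ← Nat.card_coe_set_eq, Nat.card_eq_fintype_card,
    ← Module.finrank_fintype_fun_eq_card K]
  exact ⟨Submodule.eq_top_of_finrank_eq, fun h => by rw [h, finrank_top]⟩

end MonomialFunctions

section Characters

variable {K σ : Type} [Field K] [Fintype σ]

def monomialChar (M : Submonoid (σ → K)) (a : σ → ℕ) : M →* K where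
  toFun := monomialFun (M : Set (σ → K)) a
  map_one' := by simp [monomialFun]
  map_mul' y z := by simp [monomialFun, mul_pow, Finset.prod_mul_distrib]

-- Dedekind: distinct characters of `M` are linearly independent.
lemma monomialFun_notMem_span {M : Submonoid (σ → K)} {S : Set (σ → ℕ)} {b : σ → ℕ}
    (h : ∀ a ∈ S, monomialFun (M : Set (σ → K)) a ≠ monomialFun (M : Set (σ → K)) b) :
    monomialFun (M : Set (σ → K)) b ∉
      Submodule.span K (monomialFun (M : Set (σ → K)) '' S) := by
  intro hb
  have hsub : monomialFun (M : Set (σ → K)) '' S ⊆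
      (⇑) '' {χ : M →* K | χ ≠ monomialChar M b} := by
    rintro _ ⟨a, ha, rfl⟩
    exact ⟨monomialChar M a, fun hab => h a ha congr(⇑$hab), rfl⟩
  exact (linearIndependent_monoidHom M K).notMem_span_image (x := monomialChar M b)
    (s := {χ | χ ≠ monomialChar M b}) (by simp) (Submodule.span_mono hsub hb)

end Characters

section OddCycle

open Fin.NatCast Fin.CommRing in
lemma eq_const_and_add_self_eq_zero_of_add_finRotate_eq_zero {G : Type*} [AddCommGroup G]
    {γ : ℕ} {d : Fin (2 * γ + 1) → G} (hd : ∀ i, d i + d (finRotate _ i) = 0) :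
    (∀ i, d i = d 0) ∧ d 0 + d 0 = 0 := by
  simp only [finRotate_apply] at hd
  have periodic : ∀ c, (∀ i, d (i + c) = d i) → ∀ (t : ℕ) i, d (i + t • c) = d i := by
    intro c hc t
    induction t with
    | zero => simp
    | succ t ih => intro i; rw [succ_nsmul, ← add_assoc, hc, ih]
  have step_two : ∀ i, d (i + 2) = d i := fun i => by
    have h₁ := hd i
    have h₂ := hd (i + 1)
    rw [add_assoc, one_add_one_eq_two] at h₂
    rw [← neg_eq_of_add_eq_zero_right h₂, ← neg_eq_of_add_eq_zero_right h₁, neg_neg]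
  -- `2 (γ + 1) = 1` in `Fin (2γ + 1)`, so a step of two around an odd cycle is a step of one
  have step_one : ∀ i, d (i + 1) = d i := fun i => by
    have hstep : (γ + 1) • (2 : Fin (2 * γ + 1)) = 1 := by
      rw [nsmul_eq_mul]
      have : ((2 * γ + 1 : ℕ) : Fin (2 * γ + 1)) = 0 := Fin.natCast_self _
      push_cast at this ⊢
      linear_combination this
    rw [← periodic 2 step_two (γ + 1) i, hstep]
  have hconst : ∀ i, d i = d 0 := fun i => by
    simpa using periodic 1 step_one i.val 0
  exact ⟨hconst, step_one 0 ▸ hd 0⟩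

lemma ZMod.eq_zero_or_eq_of_add_self_eq_zero {h : ℕ} {x : ZMod (2 * h)} (hx : x + x = 0) :
    x = 0 ∨ x = h := by
  rcases Nat.eq_zero_or_pos h with rfl | hpos
  · exact .inl (by simpa using hx)
  have : NeZero (2 * h) := ⟨by omega⟩
  rw [← ZMod.natCast_zmod_val x, ← Nat.cast_add, ZMod.natCast_eq_zero_iff] at hx
  obtain ⟨c, hc⟩ : h ∣ x.val :=
    (Nat.mul_dvd_mul_iff_left two_pos).1 (by rwa [two_mul x.val])
  have hlt := ZMod.val_lt x
  have hc2 : c < 2 := Nat.lt_of_mul_lt_mul_left (a := h) (by linarith)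
  rw [← ZMod.natCast_zmod_val x, hc]
  interval_cases c <;> simp

lemma Nat.modEq_or_modEq_add_of_add_finRotate_modEq {γ h : ℕ} {a b : Fin (2 * γ + 1) → ℕ}
    (hab : ∀ i, a i + a (finRotate _ i) ≡ b i + b (finRotate _ i) [MOD 2 * h]) :
    (∀ i, a i ≡ b i [MOD 2 * h]) ∨ ∀ i, a i ≡ b i + h [MOD 2 * h] := by
  simp_rw [← ZMod.natCast_eq_natCast_iff] at hab ⊢
  push_cast at hab ⊢
  obtain ⟨hconst, hself⟩ := eq_const_and_add_self_eq_zero_of_add_finRotate_eq_zero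
    (d := fun i => (a i : ZMod (2 * h)) - b i) fun i => by linear_combination hab i
  refine (ZMod.eq_zero_or_eq_of_add_self_eq_zero hself).imp (fun h0 i => ?_) fun hh i => ?_
  · linear_combination hconst i + h0
  · linear_combination hconst i + hh

end OddCycle

section Exponents

open Finset

lemma sum_const_add_ite {ι : Type*} [Fintype ι] (P : ι → Prop) [DecidablePred P] (c h : ℕ) :
    ∑ i, (c + if P i then h else 0) = Fintype.card ι * c + #{i | P i} * h := by
  simp [sum_add_distrib, sum_ite]

lemma add_mod_two_mul_of_lt {r h : ℕ} (hr : r < 2 * h) :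
    (r + h) % (2 * h) = if h ≤ r then r - h else r + h := by
  split_ifs with hhr
  · rw [Nat.mod_eq_sub_mod (by omega), Nat.mod_eq_of_lt (by omega)]
    omega
  · exact Nat.mod_eq_of_lt (by omega)

-- Both sums are at most `k (h - 1)` plus `h` times the number of entries in one half of
-- `[0, 2h)`; since `k = 2γ + 1` is odd, one of these numbers is at most `γ`.
lemma min_sum_sum_add_mod_le {γ h : ℕ} (r : Fin (2 * γ + 1) → ℕ) (hr : ∀ i, r i < 2 * h) :
    min (∑ i, r i) (∑ i, (r i + h) % (2 * h)) ≤ (2 * γ + 1) * (h - 1) + γ * h := by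
  have hS : ∑ i, r i ≤ (2 * γ + 1) * (h - 1) + #{i | h ≤ r i} * h := calc
    _ ≤ ∑ i, (h - 1 + if h ≤ r i then h else 0) := sum_le_sum fun i _ => by
      have := hr i
      split_ifs <;> omega
    _ = _ := by rw [sum_const_add_ite, Fintype.card_fin]
  have hS' : ∑ i, (r i + h) % (2 * h) ≤ (2 * γ + 1) * (h - 1) + #{i | ¬h ≤ r i} * h := calc
    _ ≤ ∑ i, (h - 1 + if ¬h ≤ r i then h else 0) := sum_le_sum fun i _ => by
      have := hr i
      rw [add_mod_two_mul_of_lt this]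
      split_ifs <;> omega
    _ = _ := by rw [sum_const_add_ite, Fintype.card_fin]
  have hcard := card_filter_add_card_filter_not (s := univ) (fun i => h ≤ r i)
  rw [card_univ, Fintype.card_fin] at hcard
  rcases le_or_gt #{i | h ≤ r i} γ with hγ | hγ
  · exact min_le_of_left_le (hS.trans (by gcongr))
  · exact min_le_of_right_le (hS'.trans (by gcongr; omega))

-- The exponents of a cycle for which the bound of `min_sum_sum_add_mod_le` is sharp.
def extremalExponent (γ h : ℕ) (i : Fin (2 * γ + 1)) : ℕ :=
  h - 1 + if (i : ℕ) < γ then h else 0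

lemma le_sum_of_modEq_extremalExponent {γ h : ℕ} {a : Fin (2 * γ + 1) → ℕ}
    (ha : (∀ i, a i ≡ extremalExponent γ h i [MOD 2 * h]) ∨
      ∀ i, a i ≡ extremalExponent γ h i + h [MOD 2 * h]) :
    (2 * γ + 1) * (h - 1) + γ * h ≤ ∑ i, a i := by
  have le_of_modEq : ∀ {a c : ℕ}, a ≡ c [MOD 2 * h] → c < 2 * h → c ≤ a := fun hac hc =>
    calc _ = _ % (2 * h) := (Nat.mod_eq_of_lt hc).symm
      _ = _ := hac.symm
      _ ≤ _ := Nat.mod_le _ _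
  rcases Nat.eq_zero_or_pos h with rfl | hpos
  · simp
  rcases ha with ha | ha
  · calc (2 * γ + 1) * (h - 1) + γ * h = ∑ i, extremalExponent γ h i := by
          simp only [extremalExponent]
          rw [sum_const_add_ite, Fintype.card_fin, Fin.card_filter_val_lt,
            min_eq_right (by omega)]
      _ ≤ _ := sum_le_sum fun i _ => le_of_modEq (ha i) (by
          simp only [extremalExponent]; split_ifs <;> omega)
  · have hcard := card_filter_add_card_filter_not (s := univ) fun i : Fin (2 * γ + 1) => ↑i < γ
    rw [Fin.card_filter_val_lt, card_univ, Fintype.card_fin, min_eq_right (by omega)] at hcard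
    calc (2 * γ + 1) * (h - 1) + γ * h
        ≤ (2 * γ + 1) * (h - 1) + #{i : Fin (2 * γ + 1) | ¬(i : ℕ) < γ} * h := by
          gcongr; omega
      _ = ∑ i : Fin (2 * γ + 1), (h - 1 + if ¬(i : ℕ) < γ then h else 0) := by
          rw [sum_const_add_ite, Fintype.card_fin]
      _ ≤ _ := sum_le_sum fun i _ => le_of_modEq ((ha i).trans ?_) (by split_ifs <;> omega)
    simp only [extremalExponent, Nat.ModEq]
    split_ifs
    · rw [show h - 1 + h + h = h - 1 + 2 * h by omega, Nat.add_mod_right, add_zero]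
    · simp

lemma prod_pow_add_mod_eq {M ι : Type*} [CommMonoid M] [Fintype ι] {h : ℕ} {y : ι → M}
    (hy : ∀ i, y i ^ (2 * h) = 1) (hprod : (∏ i, y i) ^ h = 1) (r : ι → ℕ) :
    ∏ i, y i ^ ((r i + h) % (2 * h)) = ∏ i, y i ^ r i :=
  calc _ = ∏ i, y i ^ (r i + h) := prod_congr rfl fun i _ => (pow_eq_pow_mod _ (hy i)).symm
    _ = (∏ i, y i ^ r i) * (∏ i, y i) ^ h := by simp_rw [pow_add, prod_mul_distrib, prod_pow]
    _ = _ := by rw [hprod, mul_one]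

end Exponents

section CyclesToricSet

open Finset

variable {K : Type} [Field K] {k m : ℕ}

variable (K k m) in
def cyclesToricSubmonoid : Submonoid (Fin m × Fin k → K) where
  carrier := cyclesToricSet K k m
  one_mem' := ⟨1, fun _ => one_ne_zero, fun _ => (mul_one 1).symm⟩
  mul_mem' := by
    rintro y z ⟨x, hx0, hx⟩ ⟨x', hx'0, hx'⟩
    exact ⟨x * x', fun p => mul_ne_zero (hx0 p) (hx'0 p), fun p => by
      simp only [Pi.mul_apply, hx, hx']; ring⟩

lemma coe_cyclesToricSubmonoid :
    (cyclesToricSubmonoid K k m : Set (Fin m × Fin k → K)) = cyclesToricSet K k m :=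
  rfl

lemma prod_mul_finRotate {M : Type*} [CommMonoid M] (x : Fin k → M) :
    ∏ i, x i * x (finRotate k i) = (∏ i, x i) ^ 2 := by
  rw [prod_mul_distrib, Equiv.prod_comp, sq]

lemma prod_pow_mul_finRotate {M : Type*} [CommMonoid M] (x : Fin m × Fin k → M)
    (a : Fin m × Fin k → ℕ) :
    ∏ p, (x p * x (p.1, finRotate k p.2)) ^ a p =
      ∏ p, x p ^ (a p + a (p.1, (finRotate k).symm p.2)) := by
  simp_rw [mul_pow, pow_add, prod_mul_distrib]
  congr 1
  exact Fintype.prod_equiv ((Equiv.refl _).prodCongr (finRotate k)) _ _ fun _ => by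
    simp only [Equiv.prodCongr_apply, Prod.map_fst, Prod.map_snd, Equiv.refl_apply,
      Equiv.symm_apply_apply]
    rfl

end CyclesToricSet

namespace cyclesToricSet

open Finset

variable {K : Type} [Field K] {k m : ℕ}

lemma pow_eq_of_monomialFun_eq {a b : Fin m × Fin k → ℕ}
    (hab : monomialFun (cyclesToricSubmonoid K k m : Set (Fin m × Fin k → K)) a =
      monomialFun _ b)
    {c : K} (hc : c ≠ 0) (p : Fin m × Fin k) :
    c ^ (a p + a (p.1, (finRotate k).symm p.2)) = c ^ (b p + b (p.1, (finRotate k).symm p.2)) := by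
  have hx : ∀ q, (Pi.mulSingle p c : Fin m × Fin k → K) q ≠ 0 := fun q => by
    by_cases hq : q = p <;> simp [hq, hc]
  have := congrFun hab ⟨_, Pi.mulSingle p c, hx, fun _ => rfl⟩
  simp only [monomialFun, prod_pow_mul_finRotate] at this
  rwa [Fintype.prod_eq_single p fun q hq => by simp [hq],
    Fintype.prod_eq_single p fun q hq => by simp [hq], Pi.mulSingle_eq_same] at this

lemma pow_eq_one_of_mem {h : ℕ} [Fintype K] (hq : Fintype.card K = 2 * h + 1)
    {y : Fin m × Fin k → K} (hy : y ∈ cyclesToricSet K k m) :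
    (∀ p, y p ^ (2 * h) = 1) ∧ ∀ j, (∏ i, y (j, i)) ^ h = 1 := by
  obtain ⟨x, hx0, hxy⟩ := hy
  have hpow : ∀ {z : K}, z ≠ 0 → z ^ (2 * h) = 1 := fun hz => by
    simpa [hq] using FiniteField.pow_card_sub_one_eq_one _ hz
  refine ⟨fun p => hpow (hxy p ▸ mul_ne_zero (hx0 _) (hx0 _)), fun j => ?_⟩
  simp_rw [hxy, prod_mul_finRotate fun i => x (j, i), ← pow_mul]
  exact hpow (prod_ne_zero_iff.2 fun i _ => hx0 _)

variable [Fintype K] {γ h : ℕ}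

local notation "X" =>
  (cyclesToricSubmonoid K (2 * γ + 1) m : Set (Fin m × Fin (2 * γ + 1) → K))

theorem exists_monomialFun_eq_and_sum_le (hq : Fintype.card K = 2 * h + 1)
    (a : Fin m × Fin (2 * γ + 1) → ℕ) :
    ∃ a', monomialFun X a' = monomialFun X a ∧
      ∑ p, a' p ≤ m * ((2 * γ + 1) * (h - 1) + γ * h) := by
  set r := fun p => a p % (2 * h)
  set flip := fun p => (r p + h) % (2 * h)
  set flipBlock := fun j => ∑ i, flip (j, i) < ∑ i, r (j, i)
  refine ⟨fun p => if flipBlock p.1 then flip p else r p, ?_, ?_⟩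
  · ext ⟨y, hy⟩
    obtain ⟨hy, hprod⟩ := pow_eq_one_of_mem hq hy
    have hr : ∀ j, ∏ i, y (j, i) ^ r (j, i) = ∏ i, y (j, i) ^ a (j, i) := fun j =>
      prod_congr rfl fun i _ => (pow_eq_pow_mod _ (hy _)).symm
    simp only [monomialFun, Fintype.prod_prod_type]
    refine prod_congr rfl fun j _ => ?_
    split_ifs
    · rw [← hr j]
      exact prod_pow_add_mod_eq (fun i => hy _) (hprod j) _
    · exact hr j
  · have hpos : 0 < 2 * h := by
      have := Fintype.one_lt_card (α := K)
      omega
    have hblock : ∀ j, ∑ i, (if flipBlock j then flip (j, i) else r (j, i)) ≤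
        (2 * γ + 1) * (h - 1) + γ * h := fun j => by
      refine le_trans ?_ (min_sum_sum_add_mod_le (fun i => r (j, i)) fun i => Nat.mod_lt _ hpos)
      split_ifs with hj
      · exact (min_eq_right hj.le).ge
      · exact (min_eq_left (not_lt.1 hj)).ge
    rw [Fintype.sum_prod_type]
    exact (sum_le_sum fun j _ => hblock j).trans_eq (by simp)

theorem le_sum_of_monomialFun_eq_extremalExponent (hq : Fintype.card K = 2 * h + 1)
    {a : Fin m × Fin (2 * γ + 1) → ℕ}
    (ha : monomialFun X a = monomialFun X fun p => extremalExponent γ h p.2) :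
    m * ((2 * γ + 1) * (h - 1) + γ * h) ≤ ∑ p, a p := by
  obtain ⟨g, hg⟩ := IsCyclic.exists_ofOrder_eq_natCard (α := Kˣ)
  have hord : orderOf (g : K) = 2 * h := by
    rw [orderOf_units, hg, Nat.card_units, Nat.card_eq_fintype_card, hq, Nat.add_sub_cancel]
  have hfin : IsOfFinOrder (g : K) := orderOf_pos_iff.1 <| by
    rw [hord]
    have := Fintype.one_lt_card (α := K)
    omega
  have hblock : ∀ j, (2 * γ + 1) * (h - 1) + γ * h ≤ ∑ i, a (j, i) := fun j => by
    refine le_sum_of_modEq_extremalExponent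
      (Nat.modEq_or_modEq_add_of_add_finRotate_modEq fun i => ?_)
    have := pow_eq_of_monomialFun_eq ha g.ne_zero (j, finRotate _ i)
    rw [hfin.pow_eq_pow_iff_modEq, hord] at this
    simpa [add_comm] using this
  rw [Fintype.sum_prod_type]
  exact (sum_le_sum fun j _ => hblock j).trans_eq' (by simp)

end cyclesToricSet

theorem regularity_cyclesToricSet_general (q k m γ : ℕ) (hk : k = 2 * γ + 1)
    (K : Type) [Field K] [Fintype K] (hq : Fintype.card K = q) (hq2 : 2 ∣ q - 1) :
    IsLeast {p : ℕ | ∀ d : ℕ, p ≤ d →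
        affineHilbertFunction K (cyclesToricSet K k m) d = (cyclesToricSet K k m).ncard}
      (m * (k + γ) * ((q - 1) / 2) - k * m) := by
  obtain ⟨h, hh⟩ := hq2
  have hK := Fintype.one_lt_card (α := K)
  have hcard : Fintype.card K = 2 * h + 1 := by omega
  have hdeg : m * (k + γ) * ((q - 1) / 2) - k * m = m * ((2 * γ + 1) * (h - 1) + γ * h) := by
    obtain ⟨c, rfl⟩ : ∃ c, h = c + 1 := ⟨h - 1, by omega⟩
    rw [hh, Nat.mul_div_cancel_left _ two_pos, hk, Nat.add_sub_cancel]
    exact Nat.sub_eq_of_eq_add (by ring)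
  subst hk
  rw [hdeg, ← coe_cyclesToricSubmonoid]
  refine ⟨fun d hd => (affineHilbertFunction_eq_ncard_iff _ d).2 ?_, fun p hp => ?_⟩
  · rintro _ ⟨a, rfl⟩
    obtain ⟨a', ha', hsum⟩ := cyclesToricSet.exists_monomialFun_eq_and_sum_le hcard a
    exact ha' ▸ Submodule.subset_span ⟨a', hsum.trans hd, rfl⟩
  · by_contra! hlt
    have hspan := (affineHilbertFunction_eq_ncard_iff _ _).1 (hp _ (Nat.le_sub_one_of_lt hlt))
      ⟨fun p => extremalExponent γ h p.2, rfl⟩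
    refine monomialFun_notMem_span (fun a ha heq => ?_) hspan
    have := cyclesToricSet.le_sum_of_monomialFun_eq_extremalExponent hcard heq
    simp only [Set.mem_ofPred_eq] at ha
    omega

/-- Let `𝒢` be a graph with `m` connected components, each an odd cycle of
length `k = 2γ+1`. The regularity index of `I(X*_𝒢)` — the least `p ≥ 0` such that
`H_{X*_𝒢}(d) = |X*_𝒢|` for all `d ≥ p` — equals `m(k+γ)(q−1)/2 − km`. -/
theorem regularity_cyclesToricSet (q k m γ : ℕ) (hγ : 1 ≤ γ) (hk : k = 2 * γ + 1) (hm : 1 ≤ m)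
    (K : Type) [Field K] [Fintype K] (hq : Fintype.card K = q) (hq2 : 2 ∣ q - 1) :
    IsLeast {p : ℕ | ∀ d : ℕ, p ≤ d →
        affineHilbertFunction K (cyclesToricSet K k m) d = (cyclesToricSet K k m).ncard}
      (m * (k + γ) * ((q - 1) / 2) - k * m) :=
  regularity_cyclesToricSet_general q k m γ hk K hq hq2
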